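/- Assume p(x) ≥ ν > 0 and |q(x)| ≤ M for a.e. x ∈ Ω, |λ| M C < ν where C ≥ 0 is such that ∫_Ω w² dx ≤ C ∫_Ω |∇w|² dx, w is continuous and differentiable, |∇w|² and w² are integrable on Ω, and assume that w satisfies the linearized weak equation: for every smooth compactly supported φ : ℝⁿ → ℝ with support contained in Ω, ∫_Ω ( p ∇w·∇φ + λ q w φ ) dx = − ∫_Ω ( h₁ ∇u_c·∇φ + λ h₂ u_c φ − h₃ φ ) dx. If 2 ∫_Ω ( p |∇w|² + λ q w² ) dx = 0 (i.e. G_λ″(c)[h,h] = 0), then for every such φ one has ∫_Ω ( h₁ ∇u_c·∇φ + λ h₂ u_c φ − h₃ φ ) dx = 0; that is, the linearized source e(h) = −∇·(h₁ ∇u_c) + λ h₂ u_c − h₃ vanishes as a distribution on Ω. -/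

import Mathlib

open MeasureTheory Set
open scoped RealInnerProductSpace

/-!
Coercivity: since `p ≥ ν` and `|q| ≤ M`, the Poincaré inequality gives
`∫ (p |∇w|² + λ q w²) ≥ (ν - |λ| M C) ∫ |∇w|²` with `ν - |λ| M C > 0`. The vanishing of the second
variation therefore forces `∇w = 0` a.e., then `w = 0` a.e. by Poincaré again, so the left-hand side
of the linearized weak equation is zero for every test function, and hence so is its right-hand side.
-/

section Coercivity

variable {α : Type*} [MeasurableSpace α] {μ : Measure α} {p q G W : α → ℝ} {ν M C lam : ℝ}

theorem mul_integral_le_integral_mul_of_ae_le (hp : ∀ᵐ x ∂μ, ν ≤ p x) (hG : 0 ≤ G)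
    (hGi : Integrable G μ) (hpG : Integrable (fun x => p x * G x) μ) :
    ν * ∫ x, G x ∂μ ≤ ∫ x, p x * G x ∂μ := by
  rw [← integral_const_mul]
  refine integral_mono_ae (hGi.const_mul ν) hpG ?_
  filter_upwards [hp] with x hx
  exact mul_le_mul_of_nonneg_right hx (hG x)

theorem abs_integral_mul_le_of_ae_abs_le (hq : ∀ᵐ x ∂μ, |q x| ≤ M) (hW : 0 ≤ W)
    (hWi : Integrable W μ) (hqW : Integrable (fun x => q x * W x) μ) :
    |∫ x, q x * W x ∂μ| ≤ M * ∫ x, W x ∂μ := by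
  rw [← integral_const_mul]
  refine abs_integral_le_integral_abs.trans (integral_mono_ae hqW.abs (hWi.const_mul M) ?_)
  filter_upwards [hq] with x hx
  rw [abs_mul, abs_of_nonneg (hW x)]
  exact mul_le_mul_of_nonneg_right hx (hW x)

theorem integral_eq_zero_of_coercive_form_eq_zero (hG : 0 ≤ G) (hW : 0 ≤ W)
    (hp : ∀ᵐ x ∂μ, ν ≤ p x) (hq : ∀ᵐ x ∂μ, |q x| ≤ M) (hM : 0 ≤ M)
    (hsmall : |lam| * M * C < ν)
    (hGi : Integrable G μ) (hWi : Integrable W μ)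
    (hpG : Integrable (fun x => p x * G x) μ) (hqW : Integrable (fun x => q x * W x) μ)
    (hPoincare : ∫ x, W x ∂μ ≤ C * ∫ x, G x ∂μ)
    (hform : ∫ x, (p x * G x + lam * (q x * W x)) ∂μ = 0) :
    ∫ x, G x ∂μ = 0 := by
  rw [integral_add hpG (hqW.const_mul lam), integral_const_mul] at hform
  have key : ν * ∫ x, G x ∂μ ≤ |lam| * M * C * ∫ x, G x ∂μ :=
    calc ν * ∫ x, G x ∂μ ≤ ∫ x, p x * G x ∂μ :=
          mul_integral_le_integral_mul_of_ae_le hp hG hGi hpG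
      _ = -(lam * ∫ x, q x * W x ∂μ) := by linarith
      _ ≤ |lam| * |∫ x, q x * W x ∂μ| := by rw [← abs_mul]; exact neg_le_abs _
      _ ≤ |lam| * (M * (C * ∫ x, G x ∂μ)) := by
          gcongr
          exact (abs_integral_mul_le_of_ae_abs_le hq hW hWi hqW).trans
            (mul_le_mul_of_nonneg_left hPoincare hM)
      _ = |lam| * M * C * ∫ x, G x ∂μ := by ring
  have hG0 : 0 ≤ ∫ x, G x ∂μ := integral_nonneg hG
  nlinarith

end Coercivity

theorem ae_eq_zero_of_integral_norm_sq_eq_zero {α E : Type*} [MeasurableSpace α]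
    {μ : Measure α} [NormedAddCommGroup E] {f : α → E}
    (hf : Integrable (fun x => ‖f x‖ ^ 2) μ) (h : ∫ x, ‖f x‖ ^ 2 ∂μ = 0) :
    f =ᵐ[μ] 0 := by
  filter_upwards [(integral_eq_zero_iff_of_nonneg (fun x => by positivity) hf).mp h] with x hx
  simpa using hx

theorem linearized_source_vanishes_general {n : ℕ}
    (Ω : Set (EuclideanSpace ℝ (Fin n)))
    (lam : ℝ) (p q uc h₁ h₂ h₃ w : EuclideanSpace ℝ (Fin n) → ℝ)
    (ν M C : ℝ) (hM : 0 ≤ M)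
    (hp : ∀ᵐ x ∂(volume.restrict Ω), ν ≤ p x)
    (hq : ∀ᵐ x ∂(volume.restrict Ω), |q x| ≤ M)
    (hsmall : |lam| * M * C < ν)
    (hI1 : IntegrableOn (fun x => ‖gradient w x‖ ^ 2) Ω)
    (hI2 : IntegrableOn (fun x => (w x) ^ 2) Ω)
    (hI3 : IntegrableOn (fun x => p x * ‖gradient w x‖ ^ 2) Ω)
    (hI4 : IntegrableOn (fun x => q x * (w x) ^ 2) Ω)
    (hPoincare : ∫ x in Ω, (w x) ^ 2 ≤ C * ∫ x in Ω, ‖gradient w x‖ ^ 2)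
    (hlin : ∀ φ : EuclideanSpace ℝ (Fin n) → ℝ,
      ContDiff ℝ (⊤ : ℕ∞) φ → HasCompactSupport φ → tsupport φ ⊆ Ω →
        ∫ x in Ω, (p x * ⟪gradient w x, gradient φ x⟫ + lam * q x * w x * φ x)
          = -∫ x in Ω, (h₁ x * ⟪gradient uc x, gradient φ x⟫
              + lam * h₂ x * uc x * φ x - h₃ x * φ x))
    (hzero : 2 * ∫ x in Ω, (p x * ‖gradient w x‖ ^ 2 + lam * (q x * (w x) ^ 2)) = 0) :
    ∀ φ : EuclideanSpace ℝ (Fin n) → ℝ,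
      ContDiff ℝ (⊤ : ℕ∞) φ → HasCompactSupport φ → tsupport φ ⊆ Ω →
        ∫ x in Ω, (h₁ x * ⟪gradient uc x, gradient φ x⟫
            + lam * h₂ x * uc x * φ x - h₃ x * φ x) = 0 := by
  intro φ hφ hφc hφΩ
  have hgrad_sq : ∫ x in Ω, ‖gradient w x‖ ^ 2 = 0 :=
    integral_eq_zero_of_coercive_form_eq_zero (fun x => by positivity) (fun x => by positivity)
      hp hq hM hsmall hI1 hI2 hI3 hI4 hPoincare ((mul_eq_zero.mp hzero).resolve_left two_ne_zero)
  have hw_sq : ∫ x in Ω, (w x) ^ 2 = 0 :=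
    le_antisymm (by simpa [hgrad_sq] using hPoincare) (integral_nonneg fun x => by positivity)
  have hgrad : gradient w =ᵐ[volume.restrict Ω] 0 :=
    ae_eq_zero_of_integral_norm_sq_eq_zero hI1 hgrad_sq
  have hw : w =ᵐ[volume.restrict Ω] 0 :=
    ae_eq_zero_of_integral_norm_sq_eq_zero
      (by simpa only [Real.norm_eq_abs, sq_abs] using hI2.integrable)
      (by simpa only [Real.norm_eq_abs, sq_abs] using hw_sq)
  have hform : ∫ x in Ω, (p x * ⟪gradient w x, gradient φ x⟫ + lam * q x * w x * φ x) = 0 := by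
    refine integral_eq_zero_of_ae ?_
    filter_upwards [hgrad, hw] with x hgx hwx
    simp [hgx, hwx]
  linarith [hlin φ hφ hφc hφΩ]

/-- If `G_λ''(c)[h,h] = 2 ∫_Ω (p |∇w|² + λ q w²) dx = 0` where `w` solves the
linearized weak equation, then the linearized source `e(h) = -∇·(h₁ ∇u_c) + λ h₂ u_c - h₃`
vanishes as a distribution on `Ω`: its pairing with every smooth compactly supported `φ` with
support in `Ω` is zero. -/
theorem linearized_source_vanishes {n : ℕ} (hn : 1 ≤ n)
    (Ω : Set (EuclideanSpace ℝ (Fin n))) (hΩ : IsOpen Ω)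
    (lam : ℝ) (p q uc h₁ h₂ h₃ w : EuclideanSpace ℝ (Fin n) → ℝ)
    (ν M C : ℝ) (hν : 0 < ν) (hM : 0 ≤ M) (hC : 0 ≤ C)
    (hp : ∀ᵐ x ∂(volume.restrict Ω), ν ≤ p x)
    (hq : ∀ᵐ x ∂(volume.restrict Ω), |q x| ≤ M)
    (hsmall : |lam| * M * C < ν)
    (hwC : Continuous w) (hw : Differentiable ℝ w)
    (hucd : Differentiable ℝ uc)
    (hI1 : IntegrableOn (fun x => ‖gradient w x‖ ^ 2) Ω)
    (hI2 : IntegrableOn (fun x => (w x) ^ 2) Ω)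
    (hI3 : IntegrableOn (fun x => p x * ‖gradient w x‖ ^ 2) Ω)
    (hI4 : IntegrableOn (fun x => q x * (w x) ^ 2) Ω)
    (hPoincare : ∫ x in Ω, (w x) ^ 2 ≤ C * ∫ x in Ω, ‖gradient w x‖ ^ 2)
    (hIφ : ∀ φ : EuclideanSpace ℝ (Fin n) → ℝ,
      ContDiff ℝ (⊤ : ℕ∞) φ → HasCompactSupport φ → tsupport φ ⊆ Ω →
        IntegrableOn (fun x => p x * ⟪gradient w x, gradient φ x⟫
            + lam * q x * w x * φ x) Ω ∧
        IntegrableOn (fun x => h₁ x * ⟪gradient uc x, gradient φ x⟫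
            + lam * h₂ x * uc x * φ x - h₃ x * φ x) Ω)
    (hlin : ∀ φ : EuclideanSpace ℝ (Fin n) → ℝ,
      ContDiff ℝ (⊤ : ℕ∞) φ → HasCompactSupport φ → tsupport φ ⊆ Ω →
        ∫ x in Ω, (p x * ⟪gradient w x, gradient φ x⟫ + lam * q x * w x * φ x)
          = -∫ x in Ω, (h₁ x * ⟪gradient uc x, gradient φ x⟫
              + lam * h₂ x * uc x * φ x - h₃ x * φ x))
    (hzero : 2 * ∫ x in Ω, (p x * ‖gradient w x‖ ^ 2 + lam * (q x * (w x) ^ 2)) = 0) :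
    ∀ φ : EuclideanSpace ℝ (Fin n) → ℝ,
      ContDiff ℝ (⊤ : ℕ∞) φ → HasCompactSupport φ → tsupport φ ⊆ Ω →
        ∫ x in Ω, (h₁ x * ⟪gradient uc x, gradient φ x⟫
            + lam * h₂ x * uc x * φ x - h₃ x * φ x) = 0 :=
  linearized_source_vanishes_general Ω lam p q uc h₁ h₂ h₃ w ν M C hM hp hq hsmall hI1 hI2 hI3 hI4
    hPoincare hlin hzero
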